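/- Let L be a lower semicontinuous Lipschitz seminorm on an order-unit space A, with metric ρ_L on S(A). Then L is recovered from ρ_L: for every a ∈ A, L(a) = sup{|μ(a) - ν(a)|/ρ_L(μ,ν) : μ, ν ∈ S(A), μ ≠ ν}. -/

import Mathlib

open scoped ENNReal

/-- A state of an order-unit space `(A, e)`. -/
def IsState {A : Type*} [NormedAddCommGroup A] [NormedSpace ℝ A] (e : A)
    (μ : A →L[ℝ] ℝ) : Prop :=
  μ e = 1 ∧ ‖μ‖ = 1

/-- The metric `ρ_L` on the state space: `ρ_L(μ,ν) = sup {|μ(a) - ν(a)| : L(a) ≤ 1}`. -/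
noncomputable def rhoL {A : Type*} [NormedAddCommGroup A] [NormedSpace ℝ A]
    (L : A → ℝ) (μ ν : A →L[ℝ] ℝ) : ℝ≥0∞ :=
  ⨆ (a : A) (_ : L a ≤ 1), ENNReal.ofReal |μ a - ν a|

/-!
The inequality `sup ≤ L a` is the definition of `ρ_L`, rescaled; `L a = 0` forces `a ∈ ℝ e`.
Conversely, for `0 < r < L a`, lower semicontinuity lets Hahn–Banach separate `a / r` from the
closed unit ball of `L`, giving a continuous `f` with `|f| ≤ L` (so `f e = 0`) and `r < f a`.
A small multiple `g` of `f` is a difference of two states: with `p x = inf {t | x ≤ t • e}`,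
extend `t e ↦ t` dominated by the inf-convolution of `p` and `p + g`; the extension `μ` and
`ν = μ - g` both lie below `p` and send `e` to `1`, which makes them states. Then
`|μ a - ν a| / ρ_L(μ, ν) ≥ |f a| > r`.
-/

section OrderUnit

variable {A : Type*} [AddCommGroup A] [PartialOrder A] [IsOrderedAddMonoid A] [Module ℝ A]
  [PosSMulMono ℝ A] {e : A}

lemma le_of_smul_le_smul_unit (he : 0 < e) {s t : ℝ} (h : s • e ≤ t • e) : s ≤ t := by
  by_contra! hts
  have : (s - t) • e ≤ 0 := by rwa [sub_smul, sub_nonpos]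
  exact he.not_ge (nonpos_of_smul_nonpos_of_pos_left this (sub_pos.2 hts))

noncomputable def unitGauge (e x : A) : ℝ := sInf {t : ℝ | x ≤ t • e}

lemma bddBelow_le_smul_unit (he : 0 < e) (hunit : ∀ x : A, ∃ t : ℝ, x ≤ t • e) (x : A) :
    BddBelow {t : ℝ | x ≤ t • e} := by
  obtain ⟨s, hs⟩ := hunit (-x)
  refine ⟨-s, fun t ht => le_of_smul_le_smul_unit he ?_⟩
  rw [neg_smul]
  exact (neg_le.1 hs).trans ht

lemma le_unitGauge (he : 0 < e) (hunit : ∀ x : A, ∃ t : ℝ, x ≤ t • e) {x : A} {s : ℝ}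
    (h : s • e ≤ x) : s ≤ unitGauge e x :=
  le_csInf (hunit x) fun _ ht => le_of_smul_le_smul_unit he (h.trans ht)

lemma unitGauge_le_iff (he : 0 < e) (hunit : ∀ x : A, ∃ t : ℝ, x ≤ t • e) {x : A} {t : ℝ} :
    unitGauge e x ≤ t ↔ ∀ δ > 0, x ≤ (t + δ) • e := by
  refine ⟨fun h δ hδ => ?_, fun h => le_of_forall_pos_le_add fun δ hδ =>
    csInf_le (bddBelow_le_smul_unit he hunit x) (h δ hδ)⟩
  obtain ⟨s, hs, hs_lt⟩ := Real.lt_sInf_add_pos (hunit x) hδ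
  change s < unitGauge e x + δ at hs_lt
  exact le_trans hs (smul_le_smul_of_nonneg_right (by linarith) he.le)

lemma le_smul_unitGauge_add (he : 0 < e) (hunit : ∀ x : A, ∃ t : ℝ, x ≤ t • e) (x : A) {δ : ℝ}
    (hδ : 0 < δ) : x ≤ (unitGauge e x + δ) • e :=
  (unitGauge_le_iff he hunit).1 le_rfl δ hδ

lemma unitGauge_le (he : 0 < e) (hunit : ∀ x : A, ∃ t : ℝ, x ≤ t • e) {x : A} {t : ℝ}
    (h : x ≤ t • e) : unitGauge e x ≤ t :=
  csInf_le (bddBelow_le_smul_unit he hunit x) h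

lemma unitGauge_zero (he : 0 < e) (hunit : ∀ x : A, ∃ t : ℝ, x ≤ t • e) : unitGauge e 0 = 0 :=
  le_antisymm (unitGauge_le he hunit (by simp)) (le_unitGauge he hunit (by simp))

lemma unitGauge_add_le (he : 0 < e) (hunit : ∀ x : A, ∃ t : ℝ, x ≤ t • e) (x y : A) :
    unitGauge e (x + y) ≤ unitGauge e x + unitGauge e y := by
  refine (unitGauge_le_iff he hunit).2 fun δ hδ => ?_
  convert add_le_add (le_smul_unitGauge_add he hunit x (half_pos hδ))
    (le_smul_unitGauge_add he hunit y (half_pos hδ)) using 1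
  rw [← add_smul]
  ring_nf

lemma unitGauge_add_smul (he : 0 < e) (hunit : ∀ x : A, ∃ t : ℝ, x ≤ t • e) (x : A) (t : ℝ) :
    unitGauge e (x + t • e) = unitGauge e x + t := by
  have key : ∀ (y : A) (s : ℝ), unitGauge e (y + s • e) ≤ unitGauge e y + s := fun y s =>
    (unitGauge_le_iff he hunit).2 fun δ hδ => by
      convert add_le_add (le_smul_unitGauge_add he hunit y hδ) (le_refl (s • e)) using 1
      rw [← add_smul]
      ring_nf
  refine le_antisymm (key x t) ?_
  simpa [add_assoc, ← add_smul] using key (x + t • e) (-t)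

lemma unitGauge_smul_unit (he : 0 < e) (hunit : ∀ x : A, ∃ t : ℝ, x ≤ t • e) (t : ℝ) :
    unitGauge e (t • e) = t := by
  simpa [unitGauge_zero he hunit] using unitGauge_add_smul he hunit 0 t

lemma unitGauge_smul (he : 0 < e) (hunit : ∀ x : A, ∃ t : ℝ, x ≤ t • e) {c : ℝ} (hc : 0 < c)
    (x : A) : unitGauge e (c • x) = c * unitGauge e x := by
  have key : ∀ {c : ℝ}, 0 < c → ∀ y : A, unitGauge e (c • y) ≤ c * unitGauge e y :=
    fun {c} hc y => (unitGauge_le_iff he hunit).2 fun δ hδ => by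
      convert smul_le_smul_of_nonneg_left
        (le_smul_unitGauge_add he hunit y (div_pos hδ hc)) hc.le using 1
      rw [smul_smul, mul_add, mul_div_cancel₀ _ hc.ne']
  refine le_antisymm (key hc x) ?_
  have := mul_le_mul_of_nonneg_left (key (inv_pos.2 hc) (c • x)) hc.le
  rwa [inv_smul_smul₀ hc.ne', mul_inv_cancel_left₀ hc.ne'] at this

lemma unitGauge_add_unitGauge_neg_nonneg (he : 0 < e) (hunit : ∀ x : A, ∃ t : ℝ, x ≤ t • e)
    (x : A) : 0 ≤ unitGauge e x + unitGauge e (-x) := by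
  simpa [unitGauge_zero he hunit] using unitGauge_add_le he hunit x (-x)

end OrderUnit

section OrderUnitNorm

variable {A : Type*} [NormedAddCommGroup A] [NormedSpace ℝ A] [PartialOrder A]
  [IsOrderedAddMonoid A] [PosSMulMono ℝ A] {e : A}

lemma unit_nonneg_of_norm_eq_sInf (he : e ≠ 0)
    (hnorm : ∀ a : A, ‖a‖ = sInf {r : ℝ | 0 ≤ r ∧ -(r • e) ≤ a ∧ a ≤ r • e}) : 0 ≤ e := by
  obtain ⟨r, hr, hre, -⟩ : {r : ℝ | 0 ≤ r ∧ -(r • e) ≤ e ∧ e ≤ r • e}.Nonempty := by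
    by_contra! h
    have := hnorm e
    rw [h, Real.sInf_empty] at this
    exact he (norm_eq_zero.1 this)
  refine nonneg_of_smul_nonneg_of_pos_left (a := 1 + r) ?_ (by linarith)
  rw [add_smul, one_smul]
  exact neg_le_iff_add_nonneg.1 hre

lemma norm_eq_max_unitGauge (he : 0 < e) (hunit : ∀ x : A, ∃ t : ℝ, x ≤ t • e)
    (hnorm : ∀ a : A, ‖a‖ = sInf {r : ℝ | 0 ≤ r ∧ -(r • e) ≤ a ∧ a ≤ r • e}) (x : A) :
    ‖x‖ = max (unitGauge e x) (unitGauge e (-x)) := by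
  set M := max (unitGauge e x) (unitGauge e (-x))
  have hM : 0 ≤ M := by
    have := unitGauge_add_unitGauge_neg_nonneg he hunit x
    linarith [le_max_left (unitGauge e x) (unitGauge e (-x)),
      le_max_right (unitGauge e x) (unitGauge e (-x))]
  have mem : ∀ δ > 0, M + δ ∈ {r : ℝ | 0 ≤ r ∧ -(r • e) ≤ x ∧ x ≤ r • e} := fun δ hδ =>
    ⟨by linarith, neg_le.1 ((unitGauge_le_iff he hunit).1 (le_max_right _ _) δ hδ),
      (unitGauge_le_iff he hunit).1 (le_max_left _ _) δ hδ⟩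
  rw [hnorm x]
  refine le_antisymm (le_of_forall_pos_le_add fun δ hδ => csInf_le ⟨0, fun r hr => hr.1⟩ (mem δ hδ))
    (le_csInf ⟨_, mem 1 one_pos⟩ fun r ⟨_, hrx', hrx⟩ => max_le ?_ ?_)
  · exact unitGauge_le he hunit hrx
  · exact unitGauge_le he hunit (neg_le.1 hrx')

lemma norm_unit (he : 0 < e) (hunit : ∀ x : A, ∃ t : ℝ, x ≤ t • e)
    (hnorm : ∀ a : A, ‖a‖ = sInf {r : ℝ | 0 ≤ r ∧ -(r • e) ≤ a ∧ a ≤ r • e}) : ‖e‖ = 1 := by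
  have h1 : unitGauge e e = 1 := by simpa using unitGauge_smul_unit he hunit 1
  have h2 : unitGauge e (-e) = -1 := by simpa using unitGauge_smul_unit he hunit (-1)
  rw [norm_eq_max_unitGauge he hunit hnorm, h1, h2]
  norm_num

lemma exists_isState_of_le_unitGauge (he : 0 < e) (hunit : ∀ x : A, ∃ t : ℝ, x ≤ t • e)
    (hnorm : ∀ a : A, ‖a‖ = sInf {r : ℝ | 0 ≤ r ∧ -(r • e) ≤ a ∧ a ≤ r • e})
    (φ : A →ₗ[ℝ] ℝ) (hφ : ∀ x, φ x ≤ unitGauge e x) (hφe : φ e = 1) :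
    ∃ μ : A →L[ℝ] ℝ, IsState e μ ∧ (μ : A →ₗ[ℝ] ℝ) = φ := by
  have hbound : ∀ x, ‖φ x‖ ≤ 1 * ‖x‖ := fun x => by
    have := hφ (-x)
    rw [map_neg] at this
    rw [one_mul, Real.norm_eq_abs, norm_eq_max_unitGauge he hunit hnorm, abs_le]
    exact ⟨by linarith [le_max_right (unitGauge e x) (unitGauge e (-x))],
      (hφ x).trans (le_max_left _ _)⟩
  let μ := φ.mkContinuous 1 hbound
  refine ⟨μ, ⟨hφe, le_antisymm (φ.mkContinuous_norm_le zero_le_one _) ?_⟩, rfl⟩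
  calc (1 : ℝ) = ‖μ e‖ := by simp [μ, hφe]
    _ ≤ ‖μ‖ * ‖e‖ := μ.le_opNorm e
    _ = ‖μ‖ := by rw [norm_unit he hunit hnorm, mul_one]

lemma abs_apply_le_unitGauge_add (he : 0 < e) (hunit : ∀ x : A, ∃ t : ℝ, x ≤ t • e)
    (hnorm : ∀ a : A, ‖a‖ = sInf {r : ℝ | 0 ≤ r ∧ -(r • e) ≤ a ∧ a ≤ r • e})
    (g : A →L[ℝ] ℝ) (hge : g e = 0) (z : A) :
    |g z| ≤ ‖g‖ / 2 * (unitGauge e z + unitGauge e (-z)) := by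
  set t := (unitGauge e z - unitGauge e (-z)) / 2
  have h₁ : unitGauge e (z - t • e) = (unitGauge e z + unitGauge e (-z)) / 2 := by
    rw [sub_eq_add_neg, ← neg_smul, unitGauge_add_smul he hunit]
    ring
  have h₂ : unitGauge e (-(z - t • e)) = (unitGauge e z + unitGauge e (-z)) / 2 := by
    rw [neg_sub, sub_eq_neg_add, unitGauge_add_smul he hunit]
    ring
  calc |g z| = ‖g (z - t • e)‖ := by
        rw [map_sub, map_smul, hge, smul_zero, sub_zero, Real.norm_eq_abs]
    _ ≤ ‖g‖ * ‖z - t • e‖ := g.le_opNorm _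
    _ = ‖g‖ / 2 * (unitGauge e z + unitGauge e (-z)) := by
      rw [norm_eq_max_unitGauge he hunit hnorm, h₁, h₂, max_self]
      ring

end OrderUnitNorm

section InfConvolution

variable {E : Type*} [AddCommGroup E]

noncomputable def infConv (f g : E → ℝ) (x : E) : ℝ := ⨅ z, f (x - z) + g z

variable {f g : E → ℝ}

lemma infConv_le {x : E} (hb : BddBelow (Set.range fun z => f (x - z) + g z)) (z : E) :
    infConv f g x ≤ f (x - z) + g z :=
  ciInf_le hb z

lemma le_infConv {x : E} {c : ℝ} (h : ∀ z, c ≤ f (x - z) + g z) : c ≤ infConv f g x :=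
  le_ciInf h

lemma infConv_add_le (hf : ∀ x y, f (x + y) ≤ f x + f y) (hg : ∀ x y, g (x + y) ≤ g x + g y)
    (hb : ∀ x, BddBelow (Set.range fun z => f (x - z) + g z)) (x y : E) :
    infConv f g (x + y) ≤ infConv f g x + infConv f g y :=
  le_ciInf_add_ciInf fun z w => (infConv_le (hb _) (z + w)).trans <| by
    rw [show x + y - (z + w) = x - z + (y - w) by abel]
    linarith [hf (x - z) (y - w), hg z w]

lemma infConv_smul [Module ℝ E] (hf : ∀ c : ℝ, 0 < c → ∀ x, f (c • x) = c * f x)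
    (hg : ∀ c : ℝ, 0 < c → ∀ x, g (c • x) = c * g x) {c : ℝ} (hc : 0 < c) (x : E) :
    infConv f g (c • x) = c * infConv f g x := by
  have hsurj : Function.Surjective (c • · : E → E) := fun y => ⟨c⁻¹ • y, smul_inv_smul₀ hc.ne' y⟩
  rw [infConv, infConv, Real.mul_iInf_of_nonneg hc.le, ← hsurj.iInf_comp]
  simp only [← smul_sub, hf c hc, hg c hc, mul_add]

end InfConvolution

section StateDifferences

variable {A : Type*} [NormedAddCommGroup A] [NormedSpace ℝ A] [PartialOrder A]
  [IsOrderedAddMonoid A] [PosSMulMono ℝ A] {e : A}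

theorem exists_isState_sub_eq (he : 0 < e) (hunit : ∀ x : A, ∃ t : ℝ, x ≤ t • e)
    (hnorm : ∀ a : A, ‖a‖ = sInf {r : ℝ | 0 ≤ r ∧ -(r • e) ≤ a ∧ a ≤ r • e})
    (g : A →L[ℝ] ℝ) (hge : g e = 0) (hg : ‖g‖ ≤ 2) :
    ∃ μ ν : A →L[ℝ] ℝ, IsState e μ ∧ IsState e ν ∧ μ - ν = g := by
  have hgp : ∀ z, -g z ≤ unitGauge e z + unitGauge e (-z) := fun z =>
    (neg_le_abs _).trans <| (abs_apply_le_unitGauge_add he hunit hnorm g hge z).trans <|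
      mul_le_of_le_one_left (unitGauge_add_unitGauge_neg_nonneg he hunit z) (by linarith)
  have hlower : ∀ x z, -unitGauge e (-x) ≤ unitGauge e (x - z) + (unitGauge e z + g z) :=
    fun x z => by
      have := unitGauge_add_le he hunit (-x) (x - z)
      rw [show -x + (x - z) = -z by abel] at this
      linarith [hgp z]
  have hb : ∀ x, BddBelow (Set.range fun z => unitGauge e (x - z) + (unitGauge e z + g z)) :=
    fun x => ⟨-unitGauge e (-x), Set.forall_mem_range.2 (hlower x)⟩
  -- Dominating by `infConv p (p + g)` (`p = unitGauge e`) keeps both `φ` and `φ - g` below `p`.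
  obtain ⟨φ, hφe, hφq⟩ := exists_extension_of_le_sublinear (.mkSpanSingleton e 1 he.ne')
    (infConv (unitGauge e) fun z => unitGauge e z + g z)
    (fun c hc => infConv_smul (fun c hc => unitGauge_smul he hunit hc)
      (fun c hc x => by rw [unitGauge_smul he hunit hc, map_smul, smul_eq_mul, mul_add]) hc)
    (infConv_add_le (unitGauge_add_le he hunit)
      (fun x y => by linarith [unitGauge_add_le he hunit x y, map_add g x y]) hb) <| by
      rintro ⟨x, hx⟩
      obtain ⟨t, rfl⟩ := Submodule.mem_span_singleton.1 hx
      rw [LinearPMap.mkSpanSingleton'_apply, RingHom.id_apply, smul_eq_mul, mul_one]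
      refine le_trans (le_of_eq ?_) (le_infConv (hlower _))
      rw [← neg_smul, unitGauge_smul_unit he hunit, neg_neg]
  have hφe : φ e = 1 := by
    rw [hφe ⟨e, Submodule.mem_span_singleton_self e⟩, LinearPMap.mkSpanSingleton_apply]
  obtain ⟨μ, hμ, rfl⟩ := exists_isState_of_le_unitGauge he hunit hnorm φ
    (fun x => by simpa [unitGauge_zero he hunit] using (hφq x).trans (infConv_le (hb x) 0)) hφe
  obtain ⟨ν, hν, hνφ⟩ := exists_isState_of_le_unitGauge he hunit hnorm
    ((μ - g : A →L[ℝ] ℝ) : A →ₗ[ℝ] ℝ) (fun x => by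
      have := (hφq x).trans (infConv_le (hb x) x)
      simp only [sub_self, unitGauge_zero he hunit, zero_add] at this
      simp only [ContinuousLinearMap.coe_coe, sub_apply] at this ⊢
      linarith) (by simp [hφe, hge])
  refine ⟨μ, ν, hμ, hν, ?_⟩
  rw [ContinuousLinearMap.coe_injective hνφ, sub_sub_cancel]

end StateDifferences

theorem Seminorm.exists_abs_le_of_lt_apply {E : Type*} [AddCommGroup E] [Module ℝ E]
    [TopologicalSpace E] [IsTopologicalAddGroup E] [ContinuousSMul ℝ E] [LocallyConvexSpace ℝ E]
    (p : Seminorm ℝ E) (hp : IsClosed (p.closedBall 0 1)) {a : E} {r : ℝ} (hr : 0 < r)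
    (hra : r < p a) : ∃ f : E →L[ℝ] ℝ, (∀ b, |f b| ≤ p b) ∧ r < f a := by
  have hmem : ∀ {s : ℝ}, 0 < s → ∀ b, (s⁻¹ • b ∈ p.closedBall 0 1 ↔ p b ≤ s) := fun hs b => by
    rw [p.mem_closedBall_zero, map_smul_eq_mul, Real.norm_eq_abs, abs_inv, abs_of_pos hs,
      inv_mul_le_one₀ hs]
  obtain ⟨f, u, hfB, hfa⟩ := geometric_hahn_banach_closed_point (p.convex_closedBall 0 1) hp
    (fun h => hra.not_ge ((hmem hr a).1 h))
  have hu : 0 < u := by simpa using hfB 0 (p.mem_closedBall_self zero_le_one)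
  refine ⟨u⁻¹ • f, fun b => le_of_forall_gt fun s hs => ?_, ?_⟩
  · have hs0 : 0 < s := (apply_nonneg p b).trans_lt hs
    have h₁ := hfB _ ((hmem hs0 b).2 hs.le)
    have h₂ := hfB _ ((hmem hs0 (-b)).2 ((map_neg_eq_map p b).trans_lt hs).le)
    rw [map_smul, smul_eq_mul, inv_mul_lt_iff₀ hs0] at h₁ h₂
    rw [smul_apply, smul_eq_mul, abs_mul, abs_inv, abs_of_pos hu,
      inv_mul_lt_iff₀ hu, abs_lt]
    rw [map_neg] at h₂
    constructor <;> linarith [mul_comm s u]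
  · rw [map_smul, smul_eq_mul, lt_inv_mul_iff₀ hr] at hfa
    rw [smul_apply, smul_eq_mul, lt_inv_mul_iff₀ hu]
    linarith [mul_comm r u]

section LipschitzSeminorm

variable {A : Type*} [NormedAddCommGroup A] [NormedSpace ℝ A]

lemma rhoL_le_ofReal {L : A → ℝ} {μ ν : A →L[ℝ] ℝ} {C : ℝ}
    (h : ∀ b, L b ≤ 1 → |μ b - ν b| ≤ C) : rhoL L μ ν ≤ ENNReal.ofReal C :=
  iSup₂_le fun b hb => ENNReal.ofReal_le_ofReal (h b hb)

lemma ofReal_abs_sub_le_rhoL {L : A → ℝ} (μ ν : A →L[ℝ] ℝ) {b : A} (hb : L b ≤ 1) :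
    ENNReal.ofReal |μ b - ν b| ≤ rhoL L μ ν :=
  le_iSup₂_of_le (f := fun b (_ : L b ≤ 1) => ENNReal.ofReal |μ b - ν b|) b hb le_rfl

lemma ofReal_abs_sub_le_mul_rhoL {e : A} (p : Seminorm ℝ A)
    (hnull : ∀ b, p b = 0 → ∃ t : ℝ, b = t • e) {μ ν : A →L[ℝ] ℝ} (hμν : μ e = ν e) (b : A) :
    ENNReal.ofReal |μ b - ν b| ≤ ENNReal.ofReal (p b) * rhoL p μ ν := by
  rcases (apply_nonneg p b).eq_or_lt with h | h
  · obtain ⟨t, rfl⟩ := hnull b h.symm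
    simp [hμν]
  have hb : p ((p b)⁻¹ • b) ≤ 1 := by
    rw [map_smul_eq_mul, Real.norm_eq_abs, abs_inv, abs_of_pos h, inv_mul_cancel₀ h.ne']
  calc ENNReal.ofReal |μ b - ν b|
      = ENNReal.ofReal (p b) * ENNReal.ofReal |μ ((p b)⁻¹ • b) - ν ((p b)⁻¹ • b)| := by
        rw [← ENNReal.ofReal_mul (apply_nonneg p b), map_smul, map_smul, smul_eq_mul,
          smul_eq_mul, ← mul_sub, abs_mul, abs_inv, abs_of_pos h, mul_inv_cancel_left₀ h.ne']
    _ ≤ ENNReal.ofReal (p b) * rhoL p μ ν := mul_le_mul_right (ofReal_abs_sub_le_rhoL μ ν hb) _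

lemma iSup_ratio_le {e : A} (p : Seminorm ℝ A) (hnull : ∀ b, p b = 0 → ∃ t : ℝ, b = t • e) (a : A) :
    ⨆ (μ : A →L[ℝ] ℝ) (ν : A →L[ℝ] ℝ) (_ : IsState e μ) (_ : IsState e ν) (_ : μ ≠ ν),
      ENNReal.ofReal |μ a - ν a| / rhoL p μ ν ≤ ENNReal.ofReal (p a) :=
  iSup_le fun _ => iSup_le fun _ => iSup_le fun hμ => iSup_le fun hν => iSup_le fun _ =>
    ENNReal.div_le_of_le_mul (ofReal_abs_sub_le_mul_rhoL p hnull (hμ.1.trans hν.1.symm) a)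

variable [PartialOrder A] [IsOrderedAddMonoid A] [PosSMulMono ℝ A] {e : A}

lemma ofReal_abs_le_iSup_ratio (he : 0 < e) (hunit : ∀ x : A, ∃ t : ℝ, x ≤ t • e)
    (hnorm : ∀ a : A, ‖a‖ = sInf {r : ℝ | 0 ≤ r ∧ -(r • e) ≤ a ∧ a ≤ r • e})
    (p : Seminorm ℝ A) (f : A →L[ℝ] ℝ) (hfp : ∀ b, |f b| ≤ p b) (hfe : f e = 0) {a : A}
    (ha : f a ≠ 0) :
    ENNReal.ofReal |f a| ≤
      ⨆ (μ : A →L[ℝ] ℝ) (ν : A →L[ℝ] ℝ) (_ : IsState e μ) (_ : IsState e ν) (_ : μ ≠ ν),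
        ENNReal.ofReal |μ a - ν a| / rhoL p μ ν := by
  set κ := (‖f‖ + 1)⁻¹
  have hκ : 0 < κ := by positivity
  obtain ⟨μ, ν, hμ, hν, hμν⟩ := exists_isState_sub_eq he hunit hnorm (κ • f) (by simp [hfe]) <| by
    rw [norm_smul, Real.norm_of_nonneg hκ.le, inv_mul_le_iff₀ (by positivity)]
    linarith [norm_nonneg f]
  have hdiff : ∀ b, |μ b - ν b| = κ * |f b| := fun b => by
    rw [← sub_apply, hμν, smul_apply, smul_eq_mul, abs_mul, abs_of_pos hκ]
  have hne : μ ≠ ν := fun h => ha <| by simpa [h, hκ.ne'] using hdiff a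
  have hρ : rhoL p μ ν ≤ ENNReal.ofReal κ := rhoL_le_ofReal fun b hb => by
    rw [hdiff]
    exact mul_le_of_le_one_right hκ.le ((hfp b).trans hb)
  refine le_trans ?_ (le_iSup₂_of_le μ ν <| le_iSup₂_of_le hμ hν <| le_iSup_of_le hne le_rfl)
  calc ENNReal.ofReal |f a| = ENNReal.ofReal (κ * |f a|) / ENNReal.ofReal κ := by
        rw [← ENNReal.ofReal_div_of_pos hκ, mul_div_cancel_left₀ _ hκ.ne']
    _ ≤ ENNReal.ofReal |μ a - ν a| / rhoL p μ ν := by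
        rw [hdiff]
        exact ENNReal.div_le_div_left hρ _

end LipschitzSeminorm

theorem stmt_10_general {A : Type*} [NormedAddCommGroup A] [NormedSpace ℝ A] [PartialOrder A]
    (e : A) (he : e ≠ 0)
    (haddle : ∀ a b c : A, a ≤ b → a + c ≤ b + c)
    (hsmulle : ∀ (r : ℝ) (a : A), 0 ≤ r → 0 ≤ a → 0 ≤ r • a)
    (hunit : ∀ a : A, ∃ r : ℝ, a ≤ r • e)
    (hnorm : ∀ a : A, ‖a‖ = sInf {r : ℝ | 0 ≤ r ∧ -(r • e) ≤ a ∧ a ≤ r • e})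
    (L : A → ℝ)
    (hLadd : ∀ a b : A, L (a + b) ≤ L a + L b)
    (hLsmul : ∀ (t : ℝ) (a : A), L (t • a) = |t| * L a)
    (hLnull : ∀ a : A, L a = 0 ↔ ∃ t : ℝ, a = t • e)
    (hlsc : IsClosed {a : A | L a ≤ 1})
    (a : A) :
    ENNReal.ofReal (L a) =
      ⨆ (μ : A →L[ℝ] ℝ) (ν : A →L[ℝ] ℝ) (_ : IsState e μ) (_ : IsState e ν) (_ : μ ≠ ν),
        ENNReal.ofReal |μ a - ν a| / rhoL L μ ν := by
  have : IsOrderedAddMonoid A := { add_le_add_left := fun a b h c => haddle a b c h }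
  have : PosSMulMono ℝ A := .of_smul_nonneg fun r hr x hx => hsmulle r x hr hx
  have he₀ : 0 < e := (unit_nonneg_of_norm_eq_sInf he hnorm).lt_of_ne' he
  obtain ⟨p, rfl⟩ : ∃ p : Seminorm ℝ A, ⇑p = L :=
    ⟨.of L hLadd fun t x => by rw [hLsmul, Real.norm_eq_abs], rfl⟩
  refine le_antisymm (le_of_forall_lt fun c hc => ?_) (iSup_ratio_le p (hLnull · |>.1) a)
  obtain ⟨r, -, hcr, hra⟩ := ENNReal.lt_iff_exists_real_btwn.1 hc
  have hr : 0 < r := ENNReal.ofReal_pos.1 ((zero_le : 0 ≤ c).trans_lt hcr)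
  obtain ⟨f, hfp, hrf⟩ := p.exists_abs_le_of_lt_apply (by rwa [p.closedBall_zero_eq]) hr
    ((ENNReal.ofReal_lt_ofReal_iff').1 hra).1
  have hfe : f e = 0 := abs_nonpos_iff.1 <| (hfp e).trans ((hLnull e).2 ⟨1, (one_smul ℝ e).symm⟩).le
  calc c < ENNReal.ofReal r := hcr
    _ ≤ ENNReal.ofReal |f a| := ENNReal.ofReal_le_ofReal (hrf.le.trans (le_abs_self _))
    _ ≤ _ := ofReal_abs_le_iSup_ratio he₀ hunit hnorm p f hfp hfe (hr.trans hrf).ne'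

/-- A lower semicontinuous Lipschitz seminorm `L` is recovered
from its metric `ρ_L`: for every `a`,
`L(a) = sup {|μ(a) - ν(a)|/ρ_L(μ,ν) : μ, ν ∈ S(A), μ ≠ ν}`. -/
theorem stmt_10 {A : Type*} [NormedAddCommGroup A] [NormedSpace ℝ A] [PartialOrder A]
    (e : A) (he : e ≠ 0)
    (haddle : ∀ a b c : A, a ≤ b → a + c ≤ b + c)
    (hsmulle : ∀ (r : ℝ) (a : A), 0 ≤ r → 0 ≤ a → 0 ≤ r • a)
    (hunit : ∀ a : A, ∃ r : ℝ, a ≤ r • e)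
    (harch : ∀ a : A, (∀ r : ℝ, 0 < r → a ≤ r • e) → a ≤ 0)
    (hnorm : ∀ a : A, ‖a‖ = sInf {r : ℝ | 0 ≤ r ∧ -(r • e) ≤ a ∧ a ≤ r • e})
    (L : A → ℝ)
    (hLadd : ∀ a b : A, L (a + b) ≤ L a + L b)
    (hLsmul : ∀ (t : ℝ) (a : A), L (t • a) = |t| * L a)
    (hLnull : ∀ a : A, L a = 0 ↔ ∃ t : ℝ, a = t • e)
    (hlsc : IsClosed {a : A | L a ≤ 1})
    (a : A) :
    ENNReal.ofReal (L a) =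
      ⨆ (μ : A →L[ℝ] ℝ) (ν : A →L[ℝ] ℝ) (_ : IsState e μ) (_ : IsState e ν) (_ : μ ≠ ν),
        ENNReal.ofReal |μ a - ν a| / rhoL L μ ν :=
  stmt_10_general e he haddle hsmulle hunit hnorm L hLadd hLsmul hLnull hlsc a
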